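/- Cut-free completeness of Ldm_n^m L: for every formula φ ∈ L^m, if φ is valid on all Ldm_n^m-models (⊩ φ), then for any label x the labelled sequent x:φ is derivable in the calculus Ldm_n^m L. -/

import Mathlib

namespace Stit

/-- Formulas of the language `L^m` (negation normal form), with agents `Fin m`
and propositional variables indexed by `ℕ`. -/
inductive Fml (m : ℕ) : Type
  | pos : ℕ → Fml m                  -- p
  | neg : ℕ → Fml m                  -- p̄
  | and : Fml m → Fml m → Fml m      -- φ ∧ ψ
  | or  : Fml m → Fml m → Fml m      -- φ ∨ ψ
  | box : Fml m → Fml m              -- □φ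
  | dia : Fml m → Fml m              -- ◇φ
  | ag  : Fin m → Fml m → Fml m      -- [i]φ
  | dag : Fin m → Fml m → Fml m      -- ⟨i⟩φ

namespace Fml

/-- Negation `φ̄`: replace every connective/modality by its dual and swap `p` with `p̄`. -/
def negF {m : ℕ} : Fml m → Fml m
  | pos p => neg p
  | neg p => pos p
  | and φ ψ => or φ.negF ψ.negF
  | or φ ψ => and φ.negF ψ.negF
  | box φ => dia φ.negF
  | dia φ => box φ.negF
  | ag i φ => dag i φ.negF
  | dag i φ => ag i φ.negF

/-- `φ → ψ` abbreviates `φ̄ ∨ ψ`. -/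
def impF {m : ℕ} (φ ψ : Fml m) : Fml m := or φ.negF ψ

end Fml

/-- `f 0 ∧ f 1 ∧ ⋯ ∧ f k` (left-associated). -/
def conjUpTo {m : ℕ} (f : ℕ → Fml m) : ℕ → Fml m
  | 0 => f 0
  | k+1 => Fml.and (conjUpTo f k) (f (k+1))

/-- `f 0 ∨ f 1 ∨ ⋯ ∨ f k` (left-associated). -/
def disjUpTo {m : ℕ} (f : ℕ → Fml m) : ℕ → Fml m
  | 0 => f 0
  | k+1 => Fml.or (disjUpTo f k) (f (k+1))

/-- `(f 0)̄ ∧ ((f 1)̄ ∧ ⋯ ((f (j-1))̄ ∧ base))`. -/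
def prefNegConj {m : ℕ} (f : ℕ → Fml m) : ℕ → Fml m → Fml m
  | 0, base => base
  | j+1, base => prefNegConj f j (Fml.and (f j).negF base)

/-- The antecedent `◇[i]φ_0 ∧ ◇(φ̄_0 ∧ [i]φ_1) ∧ ⋯ ∧ ◇(φ̄_0 ∧ ⋯ ∧ φ̄_{n'-1} ∧ [i]φ_{n'})`
of the (n'+1)-choice axiom. -/
def apcAnte {m : ℕ} (i : Fin m) (f : ℕ → Fml m) (n' : ℕ) : Fml m :=
  conjUpTo (fun j => Fml.dia (prefNegConj f j (Fml.ag i (f j)))) n'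

/-- The n-choice axiom `APC_n^i` for `n = n' + 1` choices `φ_0, …, φ_{n'}`. -/
def apcAx {m : ℕ} (i : Fin m) (f : ℕ → Fml m) (n' : ℕ) : Fml m :=
  (apcAnte i f n').impF (disjUpTo f n')

def diaAgIdx {m : ℕ} (f : Fin m → Fml m) (j : ℕ) : Fml m :=
  if h : j < m then Fml.dia (Fml.ag ⟨j, h⟩ (f ⟨j, h⟩)) else Fml.pos 0

def agIdx {m : ℕ} (f : Fin m → Fml m) (j : ℕ) : Fml m :=
  if h : j < m then Fml.ag ⟨j, h⟩ (f ⟨j, h⟩) else Fml.pos 0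

/-- The independence-of-agents axiom `⋀_{i∈Ag} ◇[i]φ_i → ◇(⋀_{i∈Ag} [i]φ_i)`
(for `m ≥ 1` agents). -/
def ioaAx {m : ℕ} (f : Fin m → Fml m) : Fml m :=
  (conjUpTo (diaAgIdx f) (m-1)).impF (Fml.dia (conjUpTo (agIdx f) (m-1)))

/-- An `Ldm_n^m`-model on the carrier `W`: each `rel i` is an equivalence relation (C1),
independence of agents (C2), the `n`-choice condition when `n > 0` (C3), plus a valuation. -/
structure ModelOn (n m : ℕ) (W : Type) : Type where
  nonemp : Nonempty W
  rel : Fin m → W → W → Prop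
  refl : ∀ i w, rel i w w
  symm : ∀ i w u, rel i w u → rel i u w
  trans : ∀ i w u v, rel i w u → rel i u v → rel i w v
  ioa : ∀ u : Fin m → W, ∃ v, ∀ i, rel i (u i) v
  apc : 0 < n → ∀ (i : Fin m) (w : Fin (n+1) → W),
      ∃ k j : Fin (n+1), k < j ∧ rel i (w k) (w j)
  val : ℕ → Set W

/-- Satisfaction `M, w ⊩ φ`. -/
def Sat {n m : ℕ} {W : Type} (M : ModelOn n m W) : W → Fml m → Prop
  | w, .pos p => w ∈ M.val p
  | w, .neg p => w ∉ M.val p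
  | w, .and φ ψ => Sat M w φ ∧ Sat M w ψ
  | w, .or φ ψ => Sat M w φ ∨ Sat M w ψ
  | _, .box φ => ∀ u, Sat M u φ
  | _, .dia φ => ∃ u, Sat M u φ
  | w, .ag i φ => ∀ u, M.rel i w u → Sat M u φ
  | w, .dag i φ => ∃ u, M.rel i w u ∧ Sat M u φ

/-- Validity: `⊩ φ`. -/
def Valid (n m : ℕ) (φ : Fml m) : Prop :=
  ∀ (W : Type) (M : ModelOn n m W) (w : W), Sat M w φ

/-- Semantic consequence `Γ ⊩ φ`. -/
def SemConseq (n m : ℕ) (Γ : Set (Fml m)) (φ : Fml m) : Prop :=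
  ∀ (W : Type) (M : ModelOn n m W) (w : W), (∀ ψ ∈ Γ, Sat M w ψ) → Sat M w φ

/-- The Hilbert calculus `Ldm_n^m`: classical propositional logic, S5 for `□` and each
`[i]`, the bridge axiom, IOA, the n-choice axioms (for `n > 0`), with modus ponens and
necessitation (applied to theorems). `Hderiv n m Γ φ` is `Γ ⊢_{Ldm_n^m} φ`. -/
inductive Hderiv (n m : ℕ) : Set (Fml m) → Fml m → Prop
  | prem {Γ} {φ} (h : φ ∈ Γ) : Hderiv n m Γ φ
  | ax1 {Γ} (φ ψ : Fml m) : Hderiv n m Γ (φ.impF (ψ.impF φ))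
  | ax2 {Γ} (φ ψ χ : Fml m) :
      Hderiv n m Γ ((φ.impF (ψ.impF χ)).impF ((φ.impF ψ).impF (φ.impF χ)))
  | ax3 {Γ} (φ ψ : Fml m) :
      Hderiv n m Γ ((ψ.negF.impF φ.negF).impF (φ.impF ψ))
  | boxK {Γ} (φ ψ : Fml m) :
      Hderiv n m Γ ((Fml.box (φ.impF ψ)).impF ((Fml.box φ).impF (Fml.box ψ)))
  | boxT {Γ} (φ : Fml m) : Hderiv n m Γ ((Fml.box φ).impF φ)
  | box5 {Γ} (φ : Fml m) : Hderiv n m Γ ((Fml.dia φ).impF (Fml.box (Fml.dia φ)))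
  | boxDual {Γ} (φ : Fml m) : Hderiv n m Γ (Fml.or (Fml.box φ) (Fml.dia φ.negF))
  | agK {Γ} (i : Fin m) (φ ψ : Fml m) :
      Hderiv n m Γ ((Fml.ag i (φ.impF ψ)).impF ((Fml.ag i φ).impF (Fml.ag i ψ)))
  | agT {Γ} (i : Fin m) (φ : Fml m) : Hderiv n m Γ ((Fml.ag i φ).impF φ)
  | ag5 {Γ} (i : Fin m) (φ : Fml m) :
      Hderiv n m Γ ((Fml.dag i φ).impF (Fml.ag i (Fml.dag i φ)))
  | agDual {Γ} (i : Fin m) (φ : Fml m) :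
      Hderiv n m Γ (Fml.or (Fml.ag i φ) (Fml.dag i φ.negF))
  | bridge {Γ} (i : Fin m) (φ : Fml m) :
      Hderiv n m Γ ((Fml.box φ).impF (Fml.ag i φ))
  | ioa {Γ} (f : Fin m → Fml m) : Hderiv n m Γ (ioaAx f)
  | apc {Γ} (hn : 0 < n) (i : Fin m) (f : ℕ → Fml m) :
      Hderiv n m Γ (apcAx i f (n-1))
  | mp {Γ} {φ ψ} : Hderiv n m Γ (φ.impF ψ) → Hderiv n m Γ φ → Hderiv n m Γ ψ
  | nec {Γ} {φ} : Hderiv n m ∅ φ → Hderiv n m Γ (Fml.box φ)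

/-- A relational atom `R_i x y`. -/
abbrev RAtom (m : ℕ) : Type := Fin m × ℕ × ℕ
/-- The relational part of a labelled sequent: a multiset of relational atoms. -/
abbrev RAtoms (m : ℕ) : Type := Multiset (RAtom m)
/-- A labelled formula `x : φ`. -/
abbrev LFml (m : ℕ) : Type := ℕ × Fml m
/-- The formula part of a labelled sequent: a multiset of labelled formulas. -/
abbrev LFmls (m : ℕ) : Type := Multiset (LFml m)

/-- The label `v` does not occur in the labelled sequent `R, Γ` (eigenvariable condition). -/
def freshIn {m : ℕ} (v : ℕ) (R : RAtoms m) (Γ : LFmls m) : Prop :=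
  (∀ a ∈ R, a.2.1 ≠ v ∧ a.2.2 ≠ v) ∧ ∀ e ∈ Γ, e.1 ≠ v

/-- `Reach R i w u`: `u` is `i`-reachable from `w`, i.e. there is a (possibly empty)
path of `R_i`-atoms of `R` (traversed in either direction) connecting `w` to `u`. -/
inductive Reach {m : ℕ} (R : RAtoms m) (i : Fin m) : ℕ → ℕ → Prop
  | refl (w : ℕ) : Reach R i w w
  | fwd {w u v : ℕ} : Reach R i w u → ((i, u, v) : RAtom m) ∈ R → Reach R i w v
  | bwd {w u v : ℕ} : Reach R i w u → ((i, v, u) : RAtom m) ∈ R → Reach R i w v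

/-- The relational atoms `R_1 u_1 v, …, R_m u_m v` used by the rule (IOA). -/
def ioaAtoms {m : ℕ} (u : Fin m → ℕ) (v : ℕ) : RAtoms m :=
  Multiset.ofList ((List.finRange m).map fun i => ((i, u i, v) : RAtom m))

/-- Which optional rules are present in a labelled calculus, and whether the
`[i]`-rule keeps its principal formula in the premise. -/
structure Flags : Type where
  refl : Bool    -- (refl_i)
  eucl : Bool    -- (eucl_i)
  diaAg : Bool   -- (⟨i⟩)
  pr : Bool      -- (Pr_i)
  ioa : Bool     -- (IOA)
  agKeep : Bool  -- premise of ([i]) keeps w:[i]φ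

/-- `SeqH fl n m h R Γ`: the labelled sequent `R, Γ` has a derivation of height at most
`h` in the labelled calculus determined by `fl` (with parameters `n`, `m`). -/
inductive SeqH (fl : Flags) (n m : ℕ) : ℕ → RAtoms m → LFmls m → Prop
  | id {h : ℕ} {R : RAtoms m} {Γ : LFmls m} (w p : ℕ) :
      SeqH fl n m h R ((w, Fml.pos p) ::ₘ (w, Fml.neg p) ::ₘ Γ)
  | andR {h R Γ} {w : ℕ} {φ ψ : Fml m} :
      SeqH fl n m h R ((w, Fml.and φ ψ) ::ₘ (w, φ) ::ₘ Γ) →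
      SeqH fl n m h R ((w, Fml.and φ ψ) ::ₘ (w, ψ) ::ₘ Γ) →
      SeqH fl n m (h+1) R ((w, Fml.and φ ψ) ::ₘ Γ)
  | orR {h R Γ} {w : ℕ} {φ ψ : Fml m} :
      SeqH fl n m h R ((w, Fml.or φ ψ) ::ₘ (w, φ) ::ₘ (w, ψ) ::ₘ Γ) →
      SeqH fl n m (h+1) R ((w, Fml.or φ ψ) ::ₘ Γ)
  | boxR {h R Γ} {w v : ℕ} {φ : Fml m}
      (hv : freshIn v R ((w, Fml.box φ) ::ₘ Γ)) :
      SeqH fl n m h R ((w, Fml.box φ) ::ₘ (v, φ) ::ₘ Γ) →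
      SeqH fl n m (h+1) R ((w, Fml.box φ) ::ₘ Γ)
  | diaR {h R Γ} {w u : ℕ} {φ : Fml m} :
      SeqH fl n m h R ((w, Fml.dia φ) ::ₘ (u, φ) ::ₘ Γ) →
      SeqH fl n m (h+1) R ((w, Fml.dia φ) ::ₘ Γ)
  | agR {h R Γ} {w v : ℕ} {i : Fin m} {φ : Fml m} (hfl : fl.agKeep = false)
      (hv : freshIn v R ((w, Fml.ag i φ) ::ₘ Γ)) :
      SeqH fl n m h (((i, w, v) : RAtom m) ::ₘ R) ((v, φ) ::ₘ Γ) →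
      SeqH fl n m (h+1) R ((w, Fml.ag i φ) ::ₘ Γ)
  | agRKeep {h R Γ} {w v : ℕ} {i : Fin m} {φ : Fml m} (hfl : fl.agKeep = true)
      (hv : freshIn v R ((w, Fml.ag i φ) ::ₘ Γ)) :
      SeqH fl n m h (((i, w, v) : RAtom m) ::ₘ R) ((w, Fml.ag i φ) ::ₘ (v, φ) ::ₘ Γ) →
      SeqH fl n m (h+1) R ((w, Fml.ag i φ) ::ₘ Γ)
  | dagR {h R Γ} {w u : ℕ} {i : Fin m} {φ : Fml m} (hfl : fl.diaAg = true) :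
      SeqH fl n m h (((i, w, u) : RAtom m) ::ₘ R) ((w, Fml.dag i φ) ::ₘ (u, φ) ::ₘ Γ) →
      SeqH fl n m (h+1) (((i, w, u) : RAtom m) ::ₘ R) ((w, Fml.dag i φ) ::ₘ Γ)
  | reflR {h R Γ} {i : Fin m} {w : ℕ} (hfl : fl.refl = true) :
      SeqH fl n m h (((i, w, w) : RAtom m) ::ₘ R) Γ →
      SeqH fl n m (h+1) R Γ
  | euclR {h R Γ} {i : Fin m} {w u v : ℕ} (hfl : fl.eucl = true) :
      SeqH fl n m h (((i, w, u) : RAtom m) ::ₘ ((i, w, v) : RAtom m) ::ₘ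
        ((i, u, v) : RAtom m) ::ₘ R) Γ →
      SeqH fl n m (h+1) (((i, w, u) : RAtom m) ::ₘ ((i, w, v) : RAtom m) ::ₘ R) Γ
  | ioaR {h R Γ} (hfl : fl.ioa = true) (u : Fin m → ℕ) (v : ℕ) (hv : freshIn v R Γ) :
      SeqH fl n m h (ioaAtoms u v + R) Γ →
      SeqH fl n m (h+1) R Γ
  | apcR {h R Γ} (hn : 0 < n) (i : Fin m) (w : Fin (n+1) → ℕ) :
      (∀ k j : Fin (n+1), k < j → SeqH fl n m h (((i, w k, w j) : RAtom m) ::ₘ R) Γ) →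
      SeqH fl n m (h+1) R Γ
  | prR {h R Γ} {w u : ℕ} {i : Fin m} {φ : Fml m} (hfl : fl.pr = true)
      (hreach : Reach R i w u) :
      SeqH fl n m h R ((w, Fml.dag i φ) ::ₘ (u, φ) ::ₘ Γ) →
      SeqH fl n m (h+1) R ((w, Fml.dag i φ) ::ₘ Γ)

/-- Derivability (of some height) in the labelled calculus determined by `fl`. -/
def Seq (fl : Flags) (n m : ℕ) (R : RAtoms m) (Γ : LFmls m) : Prop :=
  ∃ h, SeqH fl n m h R Γ

/-- The calculus `G3Ldm_n^m`. -/
def G3flags : Flags := ⟨true, true, true, false, true, false⟩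
/-- The calculus `G3Ldm_n^m + PR`. -/
def G3PRflags : Flags := ⟨true, true, true, true, true, false⟩
/-- `G3Ldm_n^m + PR` without the rules `(refl_i)`. -/
def G3PRnoReflFlags : Flags := ⟨false, true, true, true, true, false⟩
/-- `G3Ldm_n^m + PR` without the rules `(eucl_i)`. -/
def G3PRnoEuclFlags : Flags := ⟨true, false, true, true, true, false⟩
/-- The refined calculus `Ldm_n^m L`. -/
def LdmLflags : Flags := ⟨false, false, false, true, true, true⟩
/-- The refined single-agent calculus `Ldm_n^1 L` (no (IOA)). -/
def LdmL1flags : Flags := ⟨false, false, false, true, false, true⟩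

/-- Substitution of the label `y` for the label `x`. -/
def substLab (x y v : ℕ) : ℕ := if v = x then y else v

def substR {m : ℕ} (x y : ℕ) (R : RAtoms m) : RAtoms m :=
  R.map fun a => (a.1, substLab x y a.2.1, substLab x y a.2.2)

def substF {m : ℕ} (x y : ℕ) (Γ : LFmls m) : LFmls m :=
  Γ.map fun e => (substLab x y e.1, e.2)

/-- Height-preserving invertibility of every inference rule of the calculus given by `fl`. -/
def InvertAll (fl : Flags) (n m : ℕ) : Prop :=
  (∀ h R Γ (w : ℕ) (φ ψ : Fml m), SeqH fl n m h R ((w, Fml.and φ ψ) ::ₘ Γ) →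
     SeqH fl n m h R ((w, Fml.and φ ψ) ::ₘ (w, φ) ::ₘ Γ) ∧
     SeqH fl n m h R ((w, Fml.and φ ψ) ::ₘ (w, ψ) ::ₘ Γ)) ∧
  (∀ h R Γ (w : ℕ) (φ ψ : Fml m), SeqH fl n m h R ((w, Fml.or φ ψ) ::ₘ Γ) →
     SeqH fl n m h R ((w, Fml.or φ ψ) ::ₘ (w, φ) ::ₘ (w, ψ) ::ₘ Γ)) ∧
  (∀ h R Γ (w v : ℕ) (φ : Fml m), freshIn v R ((w, Fml.box φ) ::ₘ Γ) →
     SeqH fl n m h R ((w, Fml.box φ) ::ₘ Γ) →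
     SeqH fl n m h R ((w, Fml.box φ) ::ₘ (v, φ) ::ₘ Γ)) ∧
  (∀ h R Γ (w u : ℕ) (φ : Fml m), SeqH fl n m h R ((w, Fml.dia φ) ::ₘ Γ) →
     SeqH fl n m h R ((w, Fml.dia φ) ::ₘ (u, φ) ::ₘ Γ)) ∧
  (fl.agKeep = false → ∀ h R Γ (w v : ℕ) (i : Fin m) (φ : Fml m),
     freshIn v R ((w, Fml.ag i φ) ::ₘ Γ) →
     SeqH fl n m h R ((w, Fml.ag i φ) ::ₘ Γ) →
     SeqH fl n m h (((i, w, v) : RAtom m) ::ₘ R) ((v, φ) ::ₘ Γ)) ∧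
  (fl.agKeep = true → ∀ h R Γ (w v : ℕ) (i : Fin m) (φ : Fml m),
     freshIn v R ((w, Fml.ag i φ) ::ₘ Γ) →
     SeqH fl n m h R ((w, Fml.ag i φ) ::ₘ Γ) →
     SeqH fl n m h (((i, w, v) : RAtom m) ::ₘ R) ((w, Fml.ag i φ) ::ₘ (v, φ) ::ₘ Γ)) ∧
  (fl.diaAg = true → ∀ h R Γ (w u : ℕ) (i : Fin m) (φ : Fml m),
     SeqH fl n m h (((i, w, u) : RAtom m) ::ₘ R) ((w, Fml.dag i φ) ::ₘ Γ) →
     SeqH fl n m h (((i, w, u) : RAtom m) ::ₘ R) ((w, Fml.dag i φ) ::ₘ (u, φ) ::ₘ Γ)) ∧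
  (fl.refl = true → ∀ h R Γ (i : Fin m) (w : ℕ), SeqH fl n m h R Γ →
     SeqH fl n m h (((i, w, w) : RAtom m) ::ₘ R) Γ) ∧
  (fl.eucl = true → ∀ h R Γ (i : Fin m) (w u v : ℕ),
     SeqH fl n m h (((i, w, u) : RAtom m) ::ₘ ((i, w, v) : RAtom m) ::ₘ R) Γ →
     SeqH fl n m h (((i, w, u) : RAtom m) ::ₘ ((i, w, v) : RAtom m) ::ₘ
       ((i, u, v) : RAtom m) ::ₘ R) Γ) ∧
  (fl.ioa = true → ∀ h R Γ (u : Fin m → ℕ) (v : ℕ), freshIn v R Γ →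
     SeqH fl n m h R Γ → SeqH fl n m h (ioaAtoms u v + R) Γ) ∧
  (0 < n → ∀ h R Γ (i : Fin m) (w : Fin (n+1) → ℕ) (k j : Fin (n+1)), k < j →
     SeqH fl n m h R Γ → SeqH fl n m h (((i, w k, w j) : RAtom m) ::ₘ R) Γ) ∧
  (fl.pr = true → ∀ h R Γ (w u : ℕ) (i : Fin m) (φ : Fml m), Reach R i w u →
     SeqH fl n m h R ((w, Fml.dag i φ) ::ₘ Γ) →
     SeqH fl n m h R ((w, Fml.dag i φ) ::ₘ (u, φ) ::ₘ Γ))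

/-- A labelled sequent `R, Γ` is satisfied in `M` under the interpretation `I`. -/
def SeqSat {n m : ℕ} {W : Type} (M : ModelOn n m W) (I : ℕ → W)
    (R : RAtoms m) (Γ : LFmls m) : Prop :=
  (∀ a ∈ R, M.rel a.1 (I a.2.1) (I a.2.2)) → ∃ e ∈ Γ, Sat M (I e.1) e.2

/-- A labelled sequent is valid: satisfied in every model under every interpretation. -/
def SeqValid (n m : ℕ) (R : RAtoms m) (Γ : LFmls m) : Prop :=
  ∀ (W : Type) (M : ModelOn n m W) (I : ℕ → W), SeqSat M I R Γ

/-! Suppose `x:φ` is underivable. For every rule, an underivable conclusion has an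
underivable premise, and each premise only adds to its conclusion. Applying the rules in a
fair order, every instance infinitely often (including (IOA) and (APC) for all tuples of
labels), therefore yields an increasing chain of underivable sequents. Its union is
saturated: reachability along its `R_i`-atoms is an equivalence relation satisfying (C2) and
(C3), each `[i]`- and `□`-formula has a witness, and by (Pr_i) each `⟨i⟩`-formula is
propagated through its whole reachability class. Making `p` true exactly where `p̄` occurs,
every labelled formula of the union is false at its label, so `φ` fails at `x`. -/

deriving instance DecidableEq, Countable for Fml

section Reach

variable {m : ℕ} {R R' : RAtoms m} {i : Fin m} {w u v : ℕ}

theorem Reach.trans (h₁ : Reach R i w u) (h₂ : Reach R i u v) : Reach R i w v := by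
  induction h₂ with
  | refl => exact h₁
  | fwd _ hmem ih => exact ih.fwd hmem
  | bwd _ hmem ih => exact ih.bwd hmem

theorem Reach.symm (h : Reach R i w u) : Reach R i u w := by
  induction h with
  | refl => exact .refl _
  | fwd _ hmem ih => exact ((Reach.refl _).bwd hmem).trans ih
  | bwd _ hmem ih => exact ((Reach.refl _).fwd hmem).trans ih

theorem Reach.mono (hle : R ≤ R') (h : Reach R i w u) : Reach R' i w u := by
  induction h with
  | refl => exact .refl _
  | fwd _ hmem ih => exact ih.fwd (Multiset.mem_of_le hle hmem)
  | bwd _ hmem ih => exact ih.bwd (Multiset.mem_of_le hle hmem)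

end Reach

section Height

variable {fl : Flags} {n m : ℕ}

theorem SeqH.succ {h : ℕ} {R : RAtoms m} {Γ : LFmls m} (hd : SeqH fl n m h R Γ) :
    SeqH fl n m (h + 1) R Γ := by
  induction hd with
  | id w p => exact .id w p
  | andR _ _ ih₁ ih₂ => exact .andR ih₁ ih₂
  | orR _ ih => exact .orR ih
  | boxR hv _ ih => exact .boxR hv ih
  | diaR _ ih => exact .diaR ih
  | agR hfl hv _ ih => exact .agR hfl hv ih
  | agRKeep hfl hv _ ih => exact .agRKeep hfl hv ih
  | dagR hfl _ ih => exact .dagR hfl ih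
  | reflR hfl _ ih => exact .reflR hfl ih
  | euclR hfl _ ih => exact .euclR hfl ih
  | ioaR hfl u v hv _ ih => exact .ioaR hfl u v hv ih
  | apcR hn i w _ ih => exact .apcR hn i w ih
  | prR hfl hreach _ ih => exact .prR hfl hreach ih

theorem SeqH.mono {h h' : ℕ} {R : RAtoms m} {Γ : LFmls m} (hle : h ≤ h')
    (hd : SeqH fl n m h R Γ) : SeqH fl n m h' R Γ := by
  induction hle with
  | refl => exact hd
  | step _ ih => exact ih.succ

theorem Seq.exists_uniform_height {ι : Type*} [Finite ι] {R : ι → RAtoms m}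
    {Γ : ι → LFmls m} (hd : ∀ k, Seq fl n m (R k) (Γ k)) :
    ∃ h, ∀ k, SeqH fl n m h (R k) (Γ k) := by
  choose H hH using hd
  obtain ⟨h, hle⟩ := Finite.exists_le H
  exact ⟨h, fun k => (hH k).mono (hle k)⟩

theorem Seq.of_pos_mem_of_neg_mem {R : RAtoms m} {Γ : LFmls m} {w p : ℕ}
    (hpos : (w, Fml.pos p) ∈ Γ) (hneg : (w, Fml.neg p) ∈ Γ) : Seq fl n m R Γ := by
  obtain ⟨Δ, rfl⟩ := Multiset.exists_cons_of_mem hpos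
  obtain ⟨Δ, rfl⟩ := Multiset.exists_cons_of_mem (by simpa using hneg)
  exact ⟨0, .id w p⟩

end Height

theorem exists_freshIn {m : ℕ} (R : RAtoms m) (Γ : LFmls m) : ∃ v, freshIn v R Γ := by
  classical
  obtain ⟨v, hv⟩ := Infinite.exists_notMem_finset
    (R.map (·.2.1) + R.map (·.2.2) + Γ.map (·.1)).toFinset
  refine ⟨v, fun a ha => ⟨?_, ?_⟩, fun e he => ?_⟩ <;> rintro rfl <;> simp_all

def Underivable (n m : ℕ) (S : RAtoms m × LFmls m) : Prop :=
  ¬ Seq LdmLflags n m S.1 S.2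

inductive Task (n m : ℕ) : Type
  | tAnd (w : ℕ) (φ ψ : Fml m)
  | tOr (w : ℕ) (φ ψ : Fml m)
  | tBox (w : ℕ) (φ : Fml m)
  | tDia (w : ℕ) (φ : Fml m) (u : ℕ)
  | tAg (w : ℕ) (i : Fin m) (φ : Fml m)
  | tDag (w : ℕ) (i : Fin m) (φ : Fml m) (u : ℕ)
  | tIoa (u : Fin m → ℕ)
  | tApc (i : Fin m) (w : Fin (n + 1) → ℕ)
  deriving Countable

instance {n m : ℕ} : Nonempty (Task n m) := ⟨.tBox 0 (.pos 0)⟩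

/-- `t.Applied S S'`: passing from `S` to `S'` has applied the rule instance `t`, if it
applies to `S` at all. -/
def Task.Applied {n m : ℕ} : Task n m → RAtoms m × LFmls m → RAtoms m × LFmls m → Prop
  | .tAnd w φ ψ, S, S' => (w, Fml.and φ ψ) ∈ S.2 → (w, φ) ∈ S'.2 ∨ (w, ψ) ∈ S'.2
  | .tOr w φ ψ, S, S' => (w, Fml.or φ ψ) ∈ S.2 → (w, φ) ∈ S'.2 ∧ (w, ψ) ∈ S'.2
  | .tBox w φ, S, S' => (w, Fml.box φ) ∈ S.2 → ∃ v, (v, φ) ∈ S'.2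
  | .tDia w φ u, S, S' => (w, Fml.dia φ) ∈ S.2 → (u, φ) ∈ S'.2
  | .tAg w i φ, S, S' =>
    (w, Fml.ag i φ) ∈ S.2 → ∃ v, (i, w, v) ∈ S'.1 ∧ (v, φ) ∈ S'.2
  | .tDag w i φ u, S, S' => (w, Fml.dag i φ) ∈ S.2 ∧ Reach S.1 i w u → (u, φ) ∈ S'.2
  | .tIoa u, _, S' => ∃ v, ∀ i, (i, u i, v) ∈ S'.1
  | .tApc i w, _, S' => 0 < n → ∃ k j : Fin (n + 1), k < j ∧ (i, w k, w j) ∈ S'.1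

section Step

variable {n m : ℕ} {R R' : RAtoms m} {Γ B : LFmls m}

theorem Underivable.of_rule {a : LFml m} (hS : Underivable n m (R, Γ)) (ha : a ∈ Γ)
    (rule : ∀ {h}, SeqH LdmLflags n m h R' (a ::ₘ (B + Γ.erase a)) →
      SeqH LdmLflags n m (h + 1) R (a ::ₘ Γ.erase a)) :
    Underivable n m (R', B + Γ) := by
  rintro ⟨h, d⟩
  refine hS ⟨h + 1, ?_⟩
  rw [← Multiset.cons_erase ha]
  exact rule (by rwa [← Multiset.add_cons, Multiset.cons_erase ha])

theorem Underivable.of_and {w : ℕ} {φ ψ : Fml m} (hS : Underivable n m (R, Γ))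
    (ha : (w, Fml.and φ ψ) ∈ Γ) :
    Underivable n m (R, {(w, φ)} + Γ) ∨ Underivable n m (R, {(w, ψ)} + Γ) := by
  by_contra! hd
  obtain ⟨⟨h₁, d₁⟩, ⟨h₂, d₂⟩⟩ :
      Seq LdmLflags n m R ({(w, φ)} + Γ) ∧ Seq LdmLflags n m R ({(w, ψ)} + Γ) := by
    simpa only [Underivable, not_not] using hd
  refine hS ⟨max h₁ h₂ + 1, ?_⟩
  rw [← Multiset.cons_erase ha]
  refine .andR ?_ ?_ <;>
    rw [Multiset.cons_swap, Multiset.cons_erase ha, ← Multiset.singleton_add]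
  exacts [d₁.mono (le_max_left _ _), d₂.mono (le_max_right _ _)]

theorem Underivable.exists_apc_premise (hn : 0 < n) (i : Fin m) (w : Fin (n + 1) → ℕ)
    (hS : Underivable n m (R, Γ)) :
    ∃ k j : Fin (n + 1), k < j ∧ Underivable n m ((i, w k, w j) ::ₘ R, Γ) := by
  by_contra! hd
  obtain ⟨h, d⟩ :=
    Seq.exists_uniform_height (ι := {p : Fin (n + 1) × Fin (n + 1) // p.1 < p.2})
      fun p => not_not.mp (hd p.1.1 p.1.2 p.2)
  exact hS ⟨h + 1, .apcR hn i w fun k j hkj => d ⟨(k, j), hkj⟩⟩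

theorem exists_le_and_imp {P : Prop} {Q : RAtoms m × LFmls m → Prop}
    {S : RAtoms m × LFmls m} (hS : Underivable n m S)
    (h : P → ∃ S', Underivable n m S' ∧ S ≤ S' ∧ Q S') :
    ∃ S', Underivable n m S' ∧ S ≤ S' ∧ (P → Q S') := by
  by_cases hP : P
  · obtain ⟨S', hS', hle, hQ⟩ := h hP
    exact ⟨S', hS', hle, fun _ => hQ⟩
  · exact ⟨S, hS, le_rfl, fun h => absurd h hP⟩

theorem Underivable.exists_applied (t : Task n m) {S : RAtoms m × LFmls m}
    (hS : Underivable n m S) : ∃ S', Underivable n m S' ∧ S ≤ S' ∧ t.Applied S S' := by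
  obtain ⟨R, Γ⟩ := S
  have hΓ : ∀ e : LFml m, Γ ≤ {e} + Γ := fun _ => Multiset.le_add_left _ _
  cases t with
  | tAnd w φ ψ =>
    refine exists_le_and_imp hS fun ha => (hS.of_and ha).elim ?_ ?_ <;>
      exact fun h => ⟨_, h, ⟨le_rfl, hΓ _⟩, by simp⟩
  | tOr w φ ψ =>
    refine exists_le_and_imp hS fun ha => ⟨(R, {(w, φ), (w, ψ)} + Γ),
      hS.of_rule ha fun d => .orR ?_, ⟨le_rfl, Multiset.le_add_left _ _⟩, by simp⟩
    simpa only [Multiset.insert_eq_cons, Multiset.cons_add, Multiset.singleton_add] using d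
  | tBox w φ =>
    obtain ⟨v, hv⟩ := exists_freshIn R Γ
    refine exists_le_and_imp hS fun ha => ⟨(R, {(v, φ)} + Γ),
      hS.of_rule ha fun d => .boxR (v := v) ?_ ?_, ⟨le_rfl, hΓ _⟩, v, by simp⟩
    · rwa [Multiset.cons_erase ha]
    · rwa [Multiset.singleton_add] at d
  | tDia w φ u =>
    refine exists_le_and_imp hS fun ha => ⟨(R, {(u, φ)} + Γ),
      hS.of_rule ha fun d => .diaR (u := u) ?_, ⟨le_rfl, hΓ _⟩, by simp⟩
    rwa [Multiset.singleton_add] at d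
  | tAg w i φ =>
    obtain ⟨v, hv⟩ := exists_freshIn R Γ
    refine exists_le_and_imp hS fun ha => ⟨((i, w, v) ::ₘ R, {(v, φ)} + Γ),
      hS.of_rule ha fun d => .agRKeep (v := v) rfl ?_ ?_, ⟨Multiset.le_cons_self _ _, hΓ _⟩,
      v, by simp⟩
    · rwa [Multiset.cons_erase ha]
    · rwa [Multiset.singleton_add] at d
  | tDag w i φ u =>
    refine exists_le_and_imp hS fun ⟨ha, hreach⟩ => ⟨(R, {(u, φ)} + Γ),
      hS.of_rule ha fun d => .prR rfl hreach ?_, ⟨le_rfl, hΓ _⟩, by simp⟩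
    rwa [Multiset.singleton_add] at d
  | tIoa u =>
    obtain ⟨v, hv⟩ := exists_freshIn R Γ
    refine ⟨(ioaAtoms u v + R, Γ), fun ⟨h, d⟩ => hS ⟨h + 1, .ioaR rfl u v hv d⟩,
      ⟨Multiset.le_add_left _ _, le_rfl⟩, v, fun i => ?_⟩
    simp [ioaAtoms]
  | tApc i w =>
    refine exists_le_and_imp hS fun hn => ?_
    obtain ⟨k, j, hkj, hd⟩ := hS.exists_apc_premise hn i w
    exact ⟨_, hd, ⟨Multiset.le_cons_self _ _, le_rfl⟩, k, j, hkj,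
      Multiset.mem_cons_self _ _⟩

end Step

theorem exists_fair_chain {α τ : Type*} [Preorder α] [Countable τ] [Nonempty τ]
    {P : α → Prop} {Q : τ → α → α → Prop}
    (step : ∀ t a, P a → ∃ b, P b ∧ a ≤ b ∧ Q t a b)
    {a₀ : α} (h₀ : P a₀) :
    ∃ S : ℕ → α, S 0 = a₀ ∧ Monotone S ∧ (∀ s, P (S s)) ∧
      ∀ t s₀, ∃ s, s₀ ≤ s ∧ Q t (S s) (S (s + 1)) := by
  choose next hnext using step
  obtain ⟨g, hg⟩ := exists_surjective_nat τ
  -- every task `g k` is scheduled at all the stages `Nat.pair s₀ k`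
  let task : ℕ → τ := fun s => g s.unpair.2
  let S : ℕ → {a // P a} := fun s =>
    Nat.rec ⟨a₀, h₀⟩ (fun s a => ⟨next (task s) a.1 a.2, (hnext _ _ _).1⟩) s
  refine ⟨fun s => (S s).1, rfl, monotone_nat_of_le_succ fun s => (hnext _ _ _).2.1,
    fun s => (S s).2, fun t s₀ => ?_⟩
  obtain ⟨k, rfl⟩ := hg t
  have hQ : Q (task (Nat.pair s₀ k)) (S (Nat.pair s₀ k)).1 (S (Nat.pair s₀ k + 1)).1 :=
    (hnext _ _ (S _).2).2.2
  exact ⟨Nat.pair s₀ k, Nat.left_le_pair _ _, by simpa [task] using hQ⟩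

structure Saturated (n m : ℕ) (W : Type) where
  rel : Fin m → W → W → Prop
  fml : Set (W × Fml m)
  equivalence : ∀ i, Equivalence (rel i)
  ioa : ∀ u : Fin m → W, ∃ v, ∀ i, rel i (u i) v
  apc : 0 < n → ∀ (i : Fin m) (w : Fin (n + 1) → W),
    ∃ k j : Fin (n + 1), k < j ∧ rel i (w k) (w j)
  pos_notMem : ∀ {w p}, (w, Fml.neg p) ∈ fml → (w, Fml.pos p) ∉ fml
  and_mem : ∀ {w φ ψ}, (w, Fml.and φ ψ) ∈ fml → (w, φ) ∈ fml ∨ (w, ψ) ∈ fml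
  or_mem : ∀ {w φ ψ}, (w, Fml.or φ ψ) ∈ fml → (w, φ) ∈ fml ∧ (w, ψ) ∈ fml
  box_mem : ∀ {w φ}, (w, Fml.box φ) ∈ fml → ∃ v, (v, φ) ∈ fml
  dia_mem : ∀ {w φ}, (w, Fml.dia φ) ∈ fml → ∀ u, (u, φ) ∈ fml
  ag_mem : ∀ {w i φ}, (w, Fml.ag i φ) ∈ fml → ∃ v, rel i w v ∧ (v, φ) ∈ fml
  dag_mem : ∀ {w i φ}, (w, Fml.dag i φ) ∈ fml → ∀ u, rel i w u → (u, φ) ∈ fml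

namespace Saturated

variable {n m : ℕ} {W : Type} [Nonempty W] (H : Saturated n m W)

def toModel : ModelOn n m W where
  nonemp := ‹_›
  rel := H.rel
  refl i := (H.equivalence i).refl
  symm i _ _ := (H.equivalence i).symm
  trans i _ _ _ := (H.equivalence i).trans
  ioa := H.ioa
  apc := H.apc
  val p := {w | (w, Fml.neg p) ∈ H.fml}

theorem not_sat {w : W} {φ : Fml m} (h : (w, φ) ∈ H.fml) : ¬ Sat H.toModel w φ := by
  induction φ generalizing w with
  | pos p => exact fun hp => H.pos_notMem hp h
  | neg p => exact fun hp => hp h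
  | and φ ψ ihφ ihψ => exact fun hs => (H.and_mem h).elim (ihφ · hs.1) (ihψ · hs.2)
  | or φ ψ ihφ ihψ => exact fun hs => hs.elim (ihφ (H.or_mem h).1) (ihψ (H.or_mem h).2)
  | box φ ih =>
    obtain ⟨v, hv⟩ := H.box_mem h
    exact fun hs => ih hv (hs v)
  | dia φ ih => exact fun ⟨u, hu⟩ => ih (H.dia_mem h u) hu
  | ag i φ ih =>
    obtain ⟨v, hwv, hv⟩ := H.ag_mem h
    exact fun hs => ih hv (hs v hwv)
  | dag i φ ih => exact fun ⟨u, hwu, hu⟩ => ih (H.dag_mem h u hwu) hu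

end Saturated

section Limit

variable {n m : ℕ} {S : ℕ → RAtoms m × LFmls m}

theorem Reach.equivalence_of_monotone (hmono : Monotone S) (i : Fin m) :
    Equivalence fun w u => ∃ s, Reach (S s).1 i w u where
  refl w := ⟨0, .refl w⟩
  symm := fun ⟨s, h⟩ => ⟨s, h.symm⟩
  trans := fun ⟨s, h⟩ ⟨s', h'⟩ => ⟨max s s', (h.mono (hmono (le_max_left s s')).1).trans
    (h'.mono (hmono (le_max_right s s')).1)⟩

theorem exists_applied_of_mem (hmono : Monotone S)
    (hfair : ∀ (t : Task n m) s₀, ∃ s, s₀ ≤ s ∧ t.Applied (S s) (S (s + 1)))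
    {e : LFml m} (he : ∃ s, e ∈ (S s).2) (t : Task n m) :
    ∃ s, e ∈ (S s).2 ∧ t.Applied (S s) (S (s + 1)) := by
  obtain ⟨s₀, he⟩ := he
  obtain ⟨s, hs, happ⟩ := hfair t s₀
  exact ⟨s, Multiset.mem_of_le (hmono hs).2 he, happ⟩

def Saturated.ofChain (S : ℕ → RAtoms m × LFmls m) (hmono : Monotone S)
    (hund : ∀ s, Underivable n m (S s))
    (hfair : ∀ (t : Task n m) s₀, ∃ s, s₀ ≤ s ∧ t.Applied (S s) (S (s + 1))) :
    Saturated n m ℕ where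
  rel i w u := ∃ s, Reach (S s).1 i w u
  fml := {e | ∃ s, e ∈ (S s).2}
  equivalence := Reach.equivalence_of_monotone hmono
  ioa u := by
    obtain ⟨s, -, v, hv⟩ := hfair (.tIoa u) 0
    exact ⟨v, fun i => ⟨s + 1, (Reach.refl _).fwd (hv i)⟩⟩
  apc hn i w := by
    obtain ⟨s, -, happ⟩ := hfair (.tApc i w) 0
    obtain ⟨k, j, hkj, hmem⟩ := happ hn
    exact ⟨k, j, hkj, s + 1, (Reach.refl _).fwd hmem⟩
  pos_notMem := fun ⟨s, hneg⟩ ⟨s', hpos⟩ => hund (max s s') <|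
    Seq.of_pos_mem_of_neg_mem (Multiset.mem_of_le (hmono (le_max_right s s')).2 hpos)
      (Multiset.mem_of_le (hmono (le_max_left s s')).2 hneg)
  and_mem h := by
    obtain ⟨s, hs, happ⟩ := exists_applied_of_mem hmono hfair h (.tAnd _ _ _)
    exact (happ hs).imp (⟨s + 1, ·⟩) (⟨s + 1, ·⟩)
  or_mem h := by
    obtain ⟨s, hs, happ⟩ := exists_applied_of_mem hmono hfair h (.tOr _ _ _)
    exact ⟨⟨s + 1, (happ hs).1⟩, ⟨s + 1, (happ hs).2⟩⟩
  box_mem h := by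
    obtain ⟨s, hs, happ⟩ := exists_applied_of_mem hmono hfair h (.tBox _ _)
    obtain ⟨v, hv⟩ := happ hs
    exact ⟨v, s + 1, hv⟩
  dia_mem h u := by
    obtain ⟨s, hs, happ⟩ := exists_applied_of_mem hmono hfair h (.tDia _ _ u)
    exact ⟨s + 1, happ hs⟩
  ag_mem h := by
    obtain ⟨s, hs, happ⟩ := exists_applied_of_mem hmono hfair h (.tAg _ _ _)
    obtain ⟨v, hwv, hv⟩ := happ hs
    exact ⟨v, ⟨s + 1, (Reach.refl _).fwd hwv⟩, s + 1, hv⟩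
  dag_mem := fun ⟨s₀, h⟩ u ⟨s₁, hwu⟩ => by
    obtain ⟨s, hs, happ⟩ := hfair (.tDag _ _ _ u) (max s₀ s₁)
    exact ⟨s + 1, happ ⟨Multiset.mem_of_le (hmono ((le_max_left _ _).trans hs)).2 h,
      hwu.mono (hmono ((le_max_right _ _).trans hs)).1⟩⟩

end Limit

theorem ldmL_cut_free_completeness_general (n m : ℕ) (φ : Fml m) (hv : Valid n m φ) (x : ℕ) :
    Seq LdmLflags n m 0 {(x, φ)} := by
  by_contra hx
  obtain ⟨S, hS₀, hmono, hund, hfair⟩ :=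
    exists_fair_chain (fun t _ hS => Underivable.exists_applied t hS) (a₀ := (0, {(x, φ)})) hx
  let H := Saturated.ofChain S hmono hund hfair
  exact H.not_sat (w := x) ⟨0, by simp [hS₀]⟩ (hv ℕ H.toModel x)

/-- Cut-free completeness of `Ldm_n^m L`: if `⊩ φ` then `x:φ` is
derivable in `Ldm_n^m L`, for any label `x`. -/
theorem ldmL_cut_free_completeness (n m : ℕ) (hm : 1 ≤ m)
    (φ : Fml m) (hv : Valid n m φ) (x : ℕ) :
    Seq LdmLflags n m 0 {(x, φ)} :=
  ldmL_cut_free_completeness_general n m φ hv x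

end Stit
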